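/- arXiv:math/0305312 — 2 statements merged into one kernel-verified Lean document; each statement's English description precedes it below -/
import Mathlib

section
/- Let V be a 6-dimensional real vector space and ω an alternating 3-form on V with Δ(ω) = {0}. Fix a nonzero alternating 6-form θ on V and let Q : V → V be the unique linear map with (ι_vω)∧ω = ι_{Q(v)}θ for all v ∈ V. Then for every v ≠ 0, the kernel K(ι_vω) = {u ∈ V : ω(v,u,·) = 0} of the 2-form ι_vω is exactly the 2-dimensional subspace of V spanned by v and Q(v) (in particular, the 2-form ι_vω has rank 4). -/
open scoped TensorProduct

/-- The wedge product of real-valued alternating forms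
(antisymmetrized shuffle-sum convention, via `AlternatingMap.domCoprod`). -/
noncomputable def wedge {V : Type*} [AddCommGroup V] [Module ℝ V] {p q : ℕ}
    (α : V [⋀^Fin p]→ₗ[ℝ] ℝ) (β : V [⋀^Fin q]→ₗ[ℝ] ℝ) : V [⋀^Fin (p + q)]→ₗ[ℝ] ℝ :=
  ((LinearMap.mul' ℝ ℝ).compAlternatingMap (α.domCoprod β)).domDomCongr finSumFinEquiv

/-- The interior product `ι_v ω = ω(v, ·, …, ·)`. -/
noncomputable def iota {V : Type*} [AddCommGroup V] [Module ℝ V] {n : ℕ}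
    (v : V) (ω : V [⋀^Fin (n + 1)]→ₗ[ℝ] ℝ) : V [⋀^Fin n]→ₗ[ℝ] ℝ :=
  ω.curryLeft v

/-- `Δ(ω) = {v ∈ V : (ι_v ω) ∧ (ι_v ω) = 0}` for a 3-form `ω`. -/
noncomputable def Delta {V : Type*} [AddCommGroup V] [Module ℝ V]
    (ω : V [⋀^Fin 3]→ₗ[ℝ] ℝ) : Set V :=
  {v | wedge (iota v ω) (iota v ω) = 0}

/-- A form is multisymplectic iff `v ↦ ι_v ω` is injective. -/
noncomputable def Multisymplectic {V : Type*} [AddCommGroup V] [Module ℝ V] {n : ℕ}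
    (ω : V [⋀^Fin (n + 1)]→ₗ[ℝ] ℝ) : Prop :=
  Function.Injective fun v : V => iota v ω

/-! Write `β = ι_v ω`. Contracting the identity `ι_v ω ∧ ω = ι_{Q v} θ` once more with `v` gives
`(β ∧ β)(a, b, c, d) = θ(Q v, v, a, b, c, d)`, and `β ∧ β ≠ 0` because `Δ(ω) = {0}`. Hence `v` and
`Q v` are linearly independent, and both lie in the kernel of the 4-form `β ∧ β`. When `β ∧ β ≠ 0`
that kernel is the kernel of `β`: if `β(q, ·) ≠ 0` but `q` is in the kernel of `β ∧ β`, then `β` is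
decomposable and `β ∧ β = 0`. Finally, a nonzero 4-form on a 6-dimensional space has a kernel of
dimension at most 2, so the kernel of `β` is the span of `v` and `Q v`. -/

open Equiv

namespace Equiv.Perm

variable {n : ℕ}

-- `decomposeFin_symm_apply_succ` at numerals, where `simp` can use it.

theorem decomposeFin_symm_apply_two (e : Perm (Fin (n + 2))) (p : Fin (n + 3)) :
    decomposeFin.symm (p, e) 2 = swap 0 p (e 1).succ :=
  decomposeFin_symm_apply_succ e p 1

theorem decomposeFin_symm_apply_three (e : Perm (Fin (n + 3))) (p : Fin (n + 4)) :
    decomposeFin.symm (p, e) 3 = swap 0 p (e 2).succ :=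
  decomposeFin_symm_apply_succ e p 2

theorem decomposeFin_symm_apply_four (e : Perm (Fin (n + 4))) (p : Fin (n + 5)) :
    decomposeFin.symm (p, e) 4 = swap 0 p (e 3).succ :=
  decomposeFin_symm_apply_succ e p 3

end Equiv.Perm

namespace AlternatingMap

section Swap

variable {R M N : Type*} [CommSemiring R] [AddCommMonoid M] [Module R M] [AddCommGroup N]
  [Module R N]

theorem map_vec2_swap (f : M [⋀^Fin 2]→ₗ[R] N) (x y : M) : f ![y, x] = -f ![x, y] := by
  rw [← f.map_swap ![x, y] (show (0 : Fin 2) ≠ 1 by decide)]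
  congr 1
  funext i; fin_cases i <;> rfl

theorem map_vec3_perm (f : M [⋀^Fin 3]→ₗ[R] N) (x y z : M) :
    f ![x, z, y] = -f ![x, y, z] ∧ f ![y, x, z] = -f ![x, y, z] ∧
      f ![z, x, y] = f ![x, y, z] ∧ f ![y, z, x] = f ![x, y, z] ∧
      f ![z, y, x] = -f ![x, y, z] := by
  have swap01 : ∀ a b c, f ![b, a, c] = -f ![a, b, c] := fun a b c => by
    rw [← f.map_swap ![a, b, c] (show (0 : Fin 3) ≠ 1 by decide)]
    congr 1
    funext i; fin_cases i <;> rfl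
  have swap12 : ∀ a b c, f ![a, c, b] = -f ![a, b, c] := fun a b c => by
    rw [← f.map_swap ![a, b, c] (show (1 : Fin 3) ≠ 2 by decide)]
    congr 1
    funext i; fin_cases i <;> rfl
  refine ⟨swap12 x y z, swap01 x y z, ?_, ?_, ?_⟩
  · rw [swap01, swap12, neg_neg]
  · rw [swap12, swap01, neg_neg]
  · rw [swap01, swap12, swap01, neg_neg]

end Swap

section Kernel

variable {R M N : Type*} [CommRing R] [AddCommGroup M] [Module R M] [AddCommGroup N]
  [Module R N] {n : ℕ}

theorem map_eq_zero_of_mem_ker_curryLeft (f : M [⋀^Fin (n + 1)]→ₗ[R] N) {u : M}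
    (hu : u ∈ LinearMap.ker f.curryLeft) (y : Fin (n + 1) → M) (j : Fin (n + 1))
    (hj : y j = u) : f y = 0 := by
  have h : f (y ∘ swap 0 j) = 0 := by
    rw [← Fin.cons_self_tail (y ∘ swap 0 j), Function.comp_apply, swap_apply_left, hj]
    exact DFunLike.congr_fun hu _
  rwa [f.map_perm, smul_eq_zero_iff_eq] at h

theorem mem_ker_curryLeft_fin_two_iff (f : M [⋀^Fin 2]→ₗ[R] N) {u : M} :
    u ∈ LinearMap.ker f.curryLeft ↔ ∀ w, f ![u, w] = 0 := by
  refine ⟨fun hu w => map_eq_zero_of_mem_ker_curryLeft f hu _ 0 rfl, fun h => ?_⟩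
  ext m
  rw [curryLeft_apply_apply, ← FinVec.etaExpand_eq m]
  exact h (m 0)

end Kernel

theorem finrank_ker_curryLeft_add_le {K V N : Type*} [Field K] [AddCommGroup V] [Module K V]
    [FiniteDimensional K V] [AddCommGroup N] [Module K N] {n : ℕ}
    (f : V [⋀^Fin (n + 1)]→ₗ[K] N) (hf : f ≠ 0) :
    Module.finrank K (LinearMap.ker f.curryLeft) + (n + 1) ≤ Module.finrank K V := by
  set U := LinearMap.ker f.curryLeft
  by_contra hlt
  refine hf (ext fun x => ?_)
  have hdep : ¬LinearIndependent K (U.mkQ ∘ x) := fun h => by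
    have := h.fintype_card_le_finrank
    have := U.finrank_quotient_add_finrank
    simp only [Fintype.card_fin] at *
    omega
  obtain ⟨g, hg, j, hgj⟩ := Fintype.not_linearIndependent_iff.1 hdep
  have hU : ∑ i, g i • x i ∈ U := by
    rw [← Submodule.Quotient.mk_eq_zero, ← Submodule.mkQ_apply, map_sum]
    simpa only [map_smul, Function.comp_apply] using hg
  have h : f (Function.update x j (∑ i, g i • x i)) = g j • f x := by
    rw [f.map_update_sum, Finset.sum_eq_single j]
    · rw [f.map_update_smul, Function.update_eq_self]
    · intro i _ hij
      rw [f.map_update_smul, f.map_update_self _ (Ne.symm hij), smul_zero]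
    · simp
  rw [map_eq_zero_of_mem_ker_curryLeft f hU _ j (Function.update_self _ _ _), eq_comm,
    smul_eq_zero] at h
  exact h.resolve_left hgj

end AlternatingMap

theorem finrank_span_pair_eq_two {K V : Type*} [DivisionRing K] [AddCommGroup V] [Module K V]
    {x y : V} (h : LinearIndependent K ![x, y]) :
    Module.finrank K (Submodule.span K ({x, y} : Set V)) = 2 := by
  rw [← Matrix.range_cons_cons_empty, finrank_span_eq_card h, Fintype.card_fin]

section Wedge

variable {V : Type*} [AddCommGroup V] [Module ℝ V]

theorem wedge_apply {p q : ℕ} (α : V [⋀^Fin p]→ₗ[ℝ] ℝ) (β : V [⋀^Fin q]→ₗ[ℝ] ℝ)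
    (x : Fin (p + q) → V) :
    (p.factorial * q.factorial : ℝ) * wedge α β x =
      ∑ τ : Perm (Fin (p + q)), (Perm.sign τ : ℝ) *
        (α (fun i => x (τ (Fin.castAdd q i))) * β (fun j => x (τ (Fin.natAdd p j)))) := by
  have h := congrArg (fun f => LinearMap.mul' ℝ ℝ (f (x ∘ finSumFinEquiv)))
    (MultilinearMap.domCoprod_alternization_eq α β)
  simp only [MultilinearMap.alternatization_apply, map_sum, AlternatingMap.smul_apply,
    Fintype.card_fin, ← Nat.cast_smul_eq_nsmul ℝ, map_smul, smul_eq_mul, Nat.cast_mul] at h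
  refine h.symm.trans (Fintype.sum_equiv (permCongr finSumFinEquiv) _ _ fun σ => ?_)
  rw [Units.smul_def, ← Int.cast_smul_eq_zsmul ℝ, map_smul, smul_eq_mul, Perm.sign_permCongr]
  simp [permCongr_apply, Function.comp_def]

theorem wedge_apply_two_two (α β : V [⋀^Fin 2]→ₗ[ℝ] ℝ) (a b c d : V) :
    wedge α β ![a, b, c, d] =
      α ![a, b] * β ![c, d] - α ![a, c] * β ![b, d] + α ![a, d] * β ![b, c] +
        α ![b, c] * β ![a, d] - α ![b, d] * β ![a, c] + α ![c, d] * β ![a, b] := by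
  set x := ![a, b, c, d]
  have h := wedge_apply α β x
  have hα : ∀ τ : Perm (Fin 4), (fun i => x (τ (Fin.castAdd 2 i))) = ![x (τ 0), x (τ 1)] :=
    fun τ => by ext i; fin_cases i <;> rfl
  have hβ : ∀ τ : Perm (Fin 4), (fun j => x (τ (Fin.natAdd 2 j))) = ![x (τ 2), x (τ 3)] :=
    fun τ => by ext j; fin_cases j <;> rfl
  simp only [hα, hβ, ← Equiv.sum_comp Perm.decomposeFin.symm, Fintype.sum_prod_type,
    Perm.decomposeFin.symm_sign, Perm.decomposeFin_symm_apply_zero,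
    Perm.decomposeFin_symm_apply_one, Perm.decomposeFin_symm_apply_two,
    Perm.decomposeFin_symm_apply_three] at h
  simp [x, Fin.sum_univ_succ, swap_apply_def, Fin.succ_ne_zero] at h
  rw [α.map_vec2_swap a b, α.map_vec2_swap a c, α.map_vec2_swap a d, α.map_vec2_swap b c,
    α.map_vec2_swap b d, α.map_vec2_swap c d, β.map_vec2_swap a b, β.map_vec2_swap a c,
    β.map_vec2_swap a d, β.map_vec2_swap b c, β.map_vec2_swap b d, β.map_vec2_swap c d] at h
  rw [show x = ![a, b, c, d] from rfl]
  linarith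

theorem iota_apply {n : ℕ} (v : V) (ω : V [⋀^Fin (n + 1)]→ₗ[ℝ] ℝ) (x : Fin n → V) :
    iota v ω x = ω (Matrix.vecCons v x) :=
  rfl

theorem self_mem_ker_curryLeft_iota {n : ℕ} (v : V) (ω : V [⋀^Fin (n + 2)]→ₗ[ℝ] ℝ) :
    v ∈ LinearMap.ker (iota v ω).curryLeft := by
  ext m
  exact ω.map_eq_zero_of_eq (i := 0) (j := 1) _ rfl zero_ne_one

theorem wedge_iota_apply_cons_self (ω : V [⋀^Fin 3]→ₗ[ℝ] ℝ) (v a b c d : V) :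
    wedge (iota v ω) ω ![v, a, b, c, d] = wedge (iota v ω) (iota v ω) ![a, b, c, d] := by
  set x := ![v, a, b, c, d]
  have h := wedge_apply (iota v ω) ω x
  have hα : ∀ τ : Perm (Fin 5), (fun i => x (τ (Fin.castAdd 3 i))) = ![x (τ 0), x (τ 1)] :=
    fun τ => by ext i; fin_cases i <;> rfl
  have hβ : ∀ τ : Perm (Fin 5),
      (fun j => x (τ (Fin.natAdd 2 j))) = ![x (τ 2), x (τ 3), x (τ 4)] :=
    fun τ => by ext j; fin_cases j <;> rfl
  have hvv : ∀ s, ω ![v, v, s] = 0 := fun s =>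
    ω.map_eq_zero_of_eq (i := 0) (j := 1) _ rfl (by decide)
  have hvsv : ∀ s, ω ![v, s, v] = 0 := fun s =>
    ω.map_eq_zero_of_eq (i := 0) (j := 2) _ rfl (by decide)
  simp only [hα, hβ, iota_apply, ← Equiv.sum_comp Perm.decomposeFin.symm,
    Fintype.sum_prod_type, Perm.decomposeFin.symm_sign, Perm.decomposeFin_symm_apply_zero,
    Perm.decomposeFin_symm_apply_one, Perm.decomposeFin_symm_apply_two,
    Perm.decomposeFin_symm_apply_three, Perm.decomposeFin_symm_apply_four] at h
  simp [x, Fin.sum_univ_succ, swap_apply_def, Fin.succ_ne_zero, Nat.factorial] at h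
  simp only [hvv, hvsv, ω.map_vec3_perm v a b, ω.map_vec3_perm v a c, ω.map_vec3_perm v a d,
    ω.map_vec3_perm v b c, ω.map_vec3_perm v b d, ω.map_vec3_perm v c d] at h
  rw [wedge_apply_two_two, show x = ![v, a, b, c, d] from rfl]
  simp only [iota_apply]
  linarith

theorem ker_curryLeft_le_ker_curryLeft_wedge (α β : V [⋀^Fin 2]→ₗ[ℝ] ℝ) :
    LinearMap.ker α.curryLeft ⊓ LinearMap.ker β.curryLeft ≤
      LinearMap.ker (wedge α β).curryLeft := by
  rintro u ⟨hα, hβ⟩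
  rw [SetLike.mem_coe, AlternatingMap.mem_ker_curryLeft_fin_two_iff] at hα hβ
  ext m
  rw [AlternatingMap.curryLeft_apply_apply,
    show m = ![m 0, m 1, m 2] from (FinVec.etaExpand_eq m).symm, wedge_apply_two_two]
  simp [hα, hβ]

theorem wedge_self_eq_zero_of_decomposable (β : V [⋀^Fin 2]→ₗ[ℝ] ℝ) (φ ψ : V → ℝ)
    (h : ∀ y w, β ![y, w] = φ y * ψ w - φ w * ψ y) : wedge β β = 0 := by
  ext x
  rw [AlternatingMap.zero_apply,
    show x = ![x 0, x 1, x 2, x 3] from (FinVec.etaExpand_eq x).symm, wedge_apply_two_two]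
  simp only [h]
  ring

theorem ker_curryLeft_wedge_self (β : V [⋀^Fin 2]→ₗ[ℝ] ℝ) (hβ : wedge β β ≠ 0) :
    LinearMap.ker (wedge β β).curryLeft = LinearMap.ker β.curryLeft := by
  refine le_antisymm (fun q hq => ?_) (by simpa using ker_curryLeft_le_ker_curryLeft_wedge β β)
  rw [AlternatingMap.mem_ker_curryLeft_fin_two_iff]
  by_contra! ⟨s, hs⟩
  refine hβ (wedge_self_eq_zero_of_decomposable β (fun y => β ![q, y])
    (fun w => (β ![q, s])⁻¹ * β ![s, w]) fun y w => ?_)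
  have h := (wedge β β).map_eq_zero_of_mem_ker_curryLeft hq ![q, y, s, w] 0 rfl
  rw [wedge_apply_two_two, β.map_vec2_swap s y] at h
  field_simp
  linarith

section Contraction

variable {ω : V [⋀^Fin 3]→ₗ[ℝ] ℝ} {θ : V [⋀^Fin 6]→ₗ[ℝ] ℝ} {Q : V → V}
  (hQ : ∀ v, wedge (iota v ω) ω = iota (Q v) θ)
include hQ

theorem wedge_iota_self_apply_eq (v a b c d : V) :
    wedge (iota v ω) (iota v ω) ![a, b, c, d] = θ ![Q v, v, a, b, c, d] :=
  (wedge_iota_apply_cons_self ω v a b c d).symm.trans (DFunLike.congr_fun (hQ v) _)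

theorem linearIndependent_pair_of_wedge_iota_self_ne_zero {v : V}
    (hv : wedge (iota v ω) (iota v ω) ≠ 0) : LinearIndependent ℝ ![v, Q v] := by
  by_contra hdep
  refine hv (AlternatingMap.ext fun x => ?_)
  rw [show x = ![x 0, x 1, x 2, x 3] from (FinVec.etaExpand_eq x).symm,
    wedge_iota_self_apply_eq hQ]
  refine θ.map_linearDependent _ fun h => hdep (LinearIndependent.pair_symm_iff.1 ?_)
  convert h.comp (Fin.castAdd 4) (Fin.castAdd_injective _ _) using 1
  ext i; fin_cases i <;> rfl

theorem mem_ker_curryLeft_wedge_iota_self (v : V) :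
    Q v ∈ LinearMap.ker (wedge (iota v ω) (iota v ω)).curryLeft := by
  ext m
  rw [AlternatingMap.curryLeft_apply_apply,
    show m = ![m 0, m 1, m 2] from (FinVec.etaExpand_eq m).symm, wedge_iota_self_apply_eq hQ]
  exact θ.map_eq_zero_of_eq (i := 0) (j := 2) _ rfl (by decide)

theorem ker_curryLeft_iota_eq_span [FiniteDimensional ℝ V] (hV : Module.finrank ℝ V = 6)
    {v : V} (hv : wedge (iota v ω) (iota v ω) ≠ 0) :
    LinearMap.ker (iota v ω).curryLeft = Submodule.span ℝ {v, Q v} := by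
  have hspan := finrank_span_pair_eq_two (linearIndependent_pair_of_wedge_iota_self_ne_zero hQ hv)
  have hker := AlternatingMap.finrank_ker_curryLeft_add_le _ hv
  have hvker := self_mem_ker_curryLeft_iota v ω
  rw [← ker_curryLeft_wedge_self _ hv] at hvker ⊢
  refine (Submodule.eq_of_le_of_finrank_le ?_ (by omega)).symm
  rw [Submodule.span_le, Set.insert_subset_iff, Set.singleton_subset_iff]
  exact ⟨hvker, mem_ker_curryLeft_wedge_iota_self hQ v⟩

end Contraction

end Wedge

theorem kernel_iota_eq_span_general
    {V : Type*} [AddCommGroup V] [Module ℝ V] [FiniteDimensional ℝ V]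
    (hV : Module.finrank ℝ V = 6)
    (ω : V [⋀^Fin 3]→ₗ[ℝ] ℝ) (hΔ : Delta ω = {0})
    (θ : V [⋀^Fin 6]→ₗ[ℝ] ℝ)
    (Q : V →ₗ[ℝ] V) (hQ : ∀ v : V, wedge (iota v ω) ω = iota (Q v) θ) :
    ∀ v : V, v ≠ 0 →
      {u : V | ∀ w : V, ω ![v, u, w] = 0} = (Submodule.span ℝ {v, Q v} : Set V) ∧
      Module.finrank ℝ (Submodule.span ℝ ({v, Q v} : Set V)) = 2 := by
  intro v hv
  have hΔv : wedge (iota v ω) (iota v ω) ≠ 0 := fun h =>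
    hv (by simpa [hΔ] using show v ∈ Delta ω from h)
  refine ⟨?_, finrank_span_pair_eq_two
    (linearIndependent_pair_of_wedge_iota_self_ne_zero (Q := Q) hQ hΔv)⟩
  rw [← ker_curryLeft_iota_eq_span (Q := Q) hQ hV hΔv]
  exact Set.ext fun u => ((iota v ω).mem_ker_curryLeft_fin_two_iff).symm

/-- If `Δ(ω) = {0}`, then for every `v ≠ 0` the kernel
`K(ι_v ω) = {u : ω(v,u,·) = 0}` of the 2-form `ι_v ω` is exactly the 2-dimensional
subspace spanned by `v` and `Q v`. -/
theorem kernel_iota_eq_span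
    {V : Type*} [AddCommGroup V] [Module ℝ V] [FiniteDimensional ℝ V]
    (hV : Module.finrank ℝ V = 6)
    (ω : V [⋀^Fin 3]→ₗ[ℝ] ℝ) (hΔ : Delta ω = {0})
    (θ : V [⋀^Fin 6]→ₗ[ℝ] ℝ) (hθ : θ ≠ 0)
    (Q : V →ₗ[ℝ] V) (hQ : ∀ v : V, wedge (iota v ω) ω = iota (Q v) θ) :
    ∀ v : V, v ≠ 0 →
      {u : V | ∀ w : V, ω ![v, u, w] = 0} = (Submodule.span ℝ {v, Q v} : Set V) ∧
      Module.finrank ℝ (Submodule.span ℝ ({v, Q v} : Set V)) = 2 :=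
  kernel_iota_eq_span_general hV ω hΔ θ Q hQ
end

section
/- Let V be a 6-dimensional real vector space and ω an alternating 3-form on V with Δ(ω) = {0}. If A : V → V is a linear automorphism such that ω(v₁, Av₂, Av₃) = ω(v₁, v₂, v₃) for all v₁,v₂,v₃ ∈ V, then A = id_V or A = −id_V. -/
open scoped TensorProduct

section Aux

variable {V : Type*} [AddCommGroup V] [Module ℝ V]

private lemma fin2_eta (w : Fin 2 → V) : w = ![w 0, w 1] := by
  funext i; fin_cases i <;> simp

private lemma upd3_0 (a b c x : V) : Function.update ![x, b, c] 0 a = ![a, b, c] := by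
  funext i; fin_cases i <;> simp

private lemma upd3_1 (a b c x : V) : Function.update ![a, x, c] 1 b = ![a, b, c] := by
  funext i; fin_cases i <;> simp

private lemma upd3_2 (a b c x : V) : Function.update ![a, b, x] 2 c = ![a, b, c] := by
  funext i; fin_cases i <;> simp

private lemma sw01 (ω : V [⋀^Fin 3]→ₗ[ℝ] ℝ) (a b c : V) : ω ![b, a, c] = -ω ![a, b, c] := by
  have h := ω.map_swap (v := ![a, b, c]) (show (0 : Fin 3) ≠ 1 by decide)
  have e : ![a, b, c] ∘ Equiv.swap (0 : Fin 3) 1 = ![b, a, c] := by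
    funext i; fin_cases i <;> simp [Equiv.swap_apply_def]
  rw [e] at h; exact h

private lemma sw12 (ω : V [⋀^Fin 3]→ₗ[ℝ] ℝ) (a b c : V) : ω ![a, c, b] = -ω ![a, b, c] := by
  have h := ω.map_swap (v := ![a, b, c]) (show (1 : Fin 3) ≠ 2 by decide)
  have e : ![a, b, c] ∘ Equiv.swap (1 : Fin 3) 2 = ![a, c, b] := by
    funext i; fin_cases i <;> simp [Equiv.swap_apply_def]
  rw [e] at h; exact h

private lemma cyc (ω : V [⋀^Fin 3]→ₗ[ℝ] ℝ) (a b c : V) : ω ![b, c, a] = ω ![a, b, c] := by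
  have h1 := sw01 ω c b a
  have h2 := sw12 ω c a b
  have h3 := sw01 ω a c b
  have h4 := sw12 ω a b c
  linarith

private lemma add2 (ω : V [⋀^Fin 3]→ₗ[ℝ] ℝ) (a x y c : V) :
    ω ![a, x + y, c] = ω ![a, x, c] + ω ![a, y, c] := by
  rw [← upd3_1 a (x + y) c 0, AlternatingMap.map_update_add, upd3_1, upd3_1]

private lemma smul2 (ω : V [⋀^Fin 3]→ₗ[ℝ] ℝ) (a : V) (r : ℝ) (x c : V) :
    ω ![a, r • x, c] = r • ω ![a, x, c] := by
  rw [← upd3_1 a (r • x) c 0, AlternatingMap.map_update_smul, upd3_1]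

private lemma sub1 (ω : V [⋀^Fin 3]→ₗ[ℝ] ℝ) (x y b c : V) :
    ω ![x - y, b, c] = ω ![x, b, c] - ω ![y, b, c] := by
  rw [← upd3_0 (x - y) b c 0, AlternatingMap.map_update_sub, upd3_0, upd3_0]

private lemma neg1 (ω : V [⋀^Fin 3]→ₗ[ℝ] ℝ) (x b c : V) :
    ω ![-x, b, c] = -ω ![x, b, c] := by
  rw [← upd3_0 (-x) b c 0, AlternatingMap.map_update_neg, upd3_0]

private lemma neg2 (ω : V [⋀^Fin 3]→ₗ[ℝ] ℝ) (a x c : V) :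
    ω ![a, -x, c] = -ω ![a, x, c] := by
  rw [← upd3_1 a (-x) c 0, AlternatingMap.map_update_neg, upd3_1]

private lemma neg3 (ω : V [⋀^Fin 3]→ₗ[ℝ] ℝ) (a b x : V) :
    ω ![a, b, -x] = -ω ![a, b, x] := by
  rw [← upd3_2 a b (-x) 0, AlternatingMap.map_update_neg, upd3_2]

/-- If one argument of `wedge β γ` lies in a submodule on which both 2-forms vanish,
then the wedge vanishes. -/
private lemma wedge_arg_mem {β γ : V [⋀^Fin 2]→ₗ[ℝ] ℝ} {K : Submodule ℝ V}
    (hβ : ∀ (w : Fin 2 → V) (i : Fin 2), w i ∈ K → β w = 0)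
    (hγ : ∀ (w : Fin 2 → V) (i : Fin 2), w i ∈ K → γ w = 0)
    (x : Fin 4 → V) (j : Fin 4) (hj : x j ∈ K) : wedge β γ x = 0 := by
  have h0 : (β.domCoprod γ) (x ∘ finSumFinEquiv) = 0 := by
    rw [AlternatingMap.domCoprod_apply, MultilinearMap.sum_apply]
    apply Finset.sum_eq_zero
    intro σ _
    refine Quotient.inductionOn' σ fun τ => ?_
    rw [AlternatingMap.domCoprod.summand_mk'']
    simp only [MultilinearMap.smul_apply, MultilinearMap.domDomCongr_apply,
      MultilinearMap.domCoprod_apply, AlternatingMap.coe_multilinearMap]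
    set j' : Fin 2 ⊕ Fin 2 := finSumFinEquiv.symm j with hj'
    have hxj' : (x ∘ finSumFinEquiv) (τ (τ.symm j')) = x j := by
      simp [hj']
    rcases hs : τ.symm j' with i | i
    · have hz : β (fun i2 => (x ∘ finSumFinEquiv) (τ (Sum.inl i2))) = 0 := by
        apply hβ _ i
        show (x ∘ finSumFinEquiv) (τ (Sum.inl i)) ∈ K
        rw [← hs, hxj']
        exact hj
      rw [hz, TensorProduct.zero_tmul, smul_zero]
    · have hz : γ (fun i2 => (x ∘ finSumFinEquiv) (τ (Sum.inr i2))) = 0 := by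
        apply hγ _ i
        show (x ∘ finSumFinEquiv) (τ (Sum.inr i)) ∈ K
        rw [← hs, hxj']
        exact hj
      rw [hz, TensorProduct.tmul_zero, smul_zero]
  show ((LinearMap.mul' ℝ ℝ).compAlternatingMap (β.domCoprod γ)).domDomCongr finSumFinEquiv x = 0
  rw [AlternatingMap.domDomCongr_apply, LinearMap.compAlternatingMap_apply, h0, map_zero]

private lemma wedge_self_eq_zero [FiniteDimensional ℝ V] {β : V [⋀^Fin 2]→ₗ[ℝ] ℝ}
    {K : Submodule ℝ V}
    (hβ : ∀ (w : Fin 2 → V) (i : Fin 2), w i ∈ K → β w = 0)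
    (hq : Module.finrank ℝ (V ⧸ K) < 4) : wedge β β = 0 := by
  ext x
  rw [AlternatingMap.zero_apply]
  by_cases hli : LinearIndependent ℝ (K.mkQ ∘ x)
  · have h4 := hli.fintype_card_le_finrank
    rw [Fintype.card_fin] at h4
    omega
  · obtain ⟨g, hg, j, hj⟩ := Fintype.not_linearIndependent_iff.mp hli
    have hkK : (∑ i, g i • x i) ∈ K := by
      rw [← Submodule.Quotient.mk_eq_zero, ← Submodule.mkQ_apply, map_sum]
      simpa [Function.comp, map_smul] using hg
    have h0 := wedge_arg_mem hβ hβ (Function.update x j (∑ i, g i • x i)) j (by simp [hkK])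
    rw [AlternatingMap.map_update_sum] at h0
    have h1 : ∀ i ∈ Finset.univ, i ≠ j →
        wedge β β (Function.update x j (g i • x i)) = 0 := by
      intro i _ hij
      rw [AlternatingMap.map_update_smul]
      have he : (Function.update x j (x i)) i = (Function.update x j (x i)) j := by
        simp [Function.update_of_ne hij]
      rw [AlternatingMap.map_eq_zero_of_eq (wedge β β) _ he hij, smul_zero]
    rw [Finset.sum_eq_single j h1 (by simp)] at h0
    rw [AlternatingMap.map_update_smul, Function.update_eq_self] at h0
    exact (smul_eq_zero.mp h0).resolve_left hj

private lemma wedge_zero [FiniteDimensional ℝ V] :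
    wedge (0 : V [⋀^Fin 2]→ₗ[ℝ] ℝ) (0 : V [⋀^Fin 2]→ₗ[ℝ] ℝ) = 0 := by
  have hq : Module.finrank ℝ (V ⧸ (⊤ : Submodule ℝ V)) < 4 := by
    have h := Submodule.finrank_quotient_add_finrank (⊤ : Submodule ℝ V)
    rw [finrank_top] at h
    omega
  exact wedge_self_eq_zero (K := ⊤) (fun w i _ => rfl) hq

private lemma multisymp [FiniteDimensional ℝ V] {ω : V [⋀^Fin 3]→ₗ[ℝ] ℝ}
    (hΔ : Delta ω = {0}) {v : V} (hv : ∀ x y : V, ω ![v, x, y] = 0) : v = 0 := by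
  have h1 : iota v ω = 0 := by
    ext w
    rw [AlternatingMap.zero_apply]
    have he : w = ![w 0, w 1] := fin2_eta w
    rw [he]
    show ω ![v, w 0, w 1] = 0
    exact hv (w 0) (w 1)
  have h2 : v ∈ Delta ω := by
    show wedge (iota v ω) (iota v ω) = 0
    rw [h1]
    exact wedge_zero
  rw [hΔ] at h2
  exact h2

private lemma claim1_lemma (ω : V [⋀^Fin 3]→ₗ[ℝ] ℝ) (A : V →ₗ[ℝ] V)
    (hsurj : Function.Surjective A)
    (hpres : ∀ v₁ v₂ v₃ : V, ω ![v₁, A v₂, A v₃] = ω ![v₁, v₂, v₃]) :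
    ∀ u w z : V, ω ![A u, w, z] = ω ![u, A w, z] := by
  have c1 : ∀ u w c : V, ω ![A u, w, A c] = ω ![u, w, c] := by
    intro u w c
    have h1 := sw01 ω w (A u) (A c)
    have h2 := hpres w u c
    have h3 := sw01 ω u w c
    linarith
  intro u w z
  obtain ⟨c, rfl⟩ := hsurj z
  rw [c1, hpres]

private lemma key {V : Type*} [AddCommGroup V] [Module ℝ V] [FiniteDimensional ℝ V]
    (hV : Module.finrank ℝ V = 6)
    (ω : V [⋀^Fin 3]→ₗ[ℝ] ℝ) (hΔ : Delta ω = {0})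
    (A : V →ₗ[ℝ] V) (hsurj : Function.Surjective A)
    (hpres : ∀ v₁ v₂ v₃ : V, ω ![v₁, A v₂, A v₃] = ω ![v₁, v₂, v₃])
    (h3 : 3 ≤ Module.finrank ℝ (LinearMap.ker (A - LinearMap.id)))
    (v : V) (hv : A v = -v) : v = 0 := by
  have claim1 := claim1_lemma ω A hsurj hpres
  have M12 : ∀ x y z : V, A x = -x → A y = y → ω ![x, y, z] = 0 := by
    intro x y z hx hy
    have h := claim1 x y z
    rw [hx, hy, neg1] at h
    linarith
  by_contra hne
  set Vp := LinearMap.ker (A - LinearMap.id) with hVp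
  have hvp : ∀ y ∈ Vp, A y = y := by
    intro y hy
    have h := LinearMap.mem_ker.mp hy
    simpa [LinearMap.sub_apply, sub_eq_zero] using h
  have hvnotin : v ∉ Vp := by
    intro h
    have h1 := hvp v h
    rw [hv] at h1
    apply hne
    have h2 : v + v = 0 := by nth_rewrite 1 [← h1]; exact neg_add_cancel v
    have h3' : (2 : ℝ) • v = 0 := by rw [two_smul]; exact h2
    rcases smul_eq_zero.mp h3' with h | h
    · norm_num at h
    · exact h
  set K := Vp ⊔ (ℝ ∙ v) with hK
  have hvK : v ∈ K := Submodule.mem_sup_right (Submodule.mem_span_singleton_self v)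
  have hlt : Vp < K := lt_of_le_of_ne le_sup_left (fun h => hvnotin (h ▸ hvK))
  have hK4 : 4 ≤ Module.finrank ℝ K := by
    have := Submodule.finrank_lt_finrank_of_lt hlt
    omega
  have hq : Module.finrank ℝ (V ⧸ K) < 4 := by
    have := Submodule.finrank_quotient_add_finrank K
    rw [hV] at this
    omega
  have base : ∀ k ∈ K, ∀ y, ω ![v, k, y] = 0 := by
    intro k hk y
    obtain ⟨p, hp, q, hq', rfl⟩ := Submodule.mem_sup.mp hk
    obtain ⟨c, rfl⟩ := Submodule.mem_span_singleton.mp hq'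
    rw [add2, smul2, M12 v p y hv (hvp p hp)]
    have hz : ω ![v, v, y] = 0 :=
      AlternatingMap.map_eq_zero_of_eq ω ![v, v, y] (i := 0) (j := 1) (by simp) (by decide)
    rw [hz]
    simp
  have hβ : ∀ (w : Fin 2 → V) (i : Fin 2), w i ∈ K → (iota v ω) w = 0 := by
    intro w i hw
    have hwe : w = ![w 0, w 1] := fin2_eta w
    have happ : ∀ a b : V, (iota v ω) ![a, b] = ω ![v, a, b] := fun a b => rfl
    have hi : i = 0 ∨ i = 1 := by fin_cases i <;> simp
    rcases hi with hi | hi <;> subst hi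
    · rw [hwe, happ]
      exact base _ hw _
    · rw [hwe, happ, sw12 ω v (w 1) (w 0)]
      rw [base _ hw _]
      simp
  have hw0 : wedge (iota v ω) (iota v ω) = 0 := wedge_self_eq_zero hβ hq
  have h2 : v ∈ Delta ω := hw0
  rw [hΔ] at h2
  exact hne h2

end Aux

/-- If `ω` is a 3-form on a 6-dimensional real vector space with `Δ(ω) = {0}` and
`A` is a linear automorphism with `ω(v₁, Av₂, Av₃) = ω(v₁, v₂, v₃)` for all `v₁,v₂,v₃`,
then `A = id` or `A = -id`. -/
theorem automorphism_preserving_eq_pm_id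
    {V : Type*} [AddCommGroup V] [Module ℝ V] [FiniteDimensional ℝ V]
    (hV : Module.finrank ℝ V = 6)
    (ω : V [⋀^Fin 3]→ₗ[ℝ] ℝ) (hΔ : Delta ω = {0})
    (A : V →ₗ[ℝ] V) (hA : Function.Bijective A)
    (hpres : ∀ v₁ v₂ v₃ : V, ω ![v₁, A v₂, A v₃] = ω ![v₁, v₂, v₃]) :
    A = LinearMap.id ∨ A = -LinearMap.id := by
  have hsurj : Function.Surjective A := hA.2
  have claim1 := claim1_lemma ω A hsurj hpres
  -- `ω(u, v, A²z) = ω(u, v, z)`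
  have G : ∀ u v z : V, ω ![u, v, A (A z)] = ω ![u, v, z] := by
    intro u v z
    obtain ⟨c, rfl⟩ := hsurj v
    rw [hpres u c (A z)]
    calc ω ![u, c, A z]
        = ω ![A z, u, c] := cyc ω (A z) u c
      _ = ω ![c, A z, u] := cyc ω c (A z) u
      _ = ω ![A c, z, u] := (claim1 c z u).symm
      _ = ω ![u, A c, z] := cyc ω u (A c) z
  -- `A ∘ A = id`
  have hsq : ∀ z : V, A (A z) = z := by
    intro z
    have hzero : ∀ x y : V, ω ![A (A z) - z, x, y] = 0 := by
      intro x y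
      rw [sub1]
      have e1 : ω ![A (A z), x, y] = ω ![x, y, A (A z)] := (cyc ω (A (A z)) x y).symm
      have e2 : ω ![z, x, y] = ω ![x, y, z] := (cyc ω z x y).symm
      rw [e1, e2, G x y z, sub_self]
    have h := multisymp hΔ hzero
    exact sub_eq_zero.mp h
  set Vp := LinearMap.ker (A - LinearMap.id) with hVp
  set Vm := LinearMap.ker (A + LinearMap.id) with hVm
  have hsup : Vp ⊔ Vm = ⊤ := by
    rw [Submodule.eq_top_iff']
    intro x
    have hx : x = (1 / 2 : ℝ) • (x + A x) + (1 / 2 : ℝ) • (x - A x) := by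
      module
    rw [hx]
    apply Submodule.add_mem_sup
    · rw [hVp, LinearMap.mem_ker, map_smul]
      simp only [LinearMap.sub_apply, LinearMap.id_apply, map_add, hsq]
      module
    · rw [hVm, LinearMap.mem_ker, map_smul]
      simp only [LinearMap.add_apply, LinearMap.id_apply, map_sub, hsq]
      module
  have hsum : 6 ≤ Module.finrank ℝ Vp + Module.finrank ℝ Vm := by
    have h := Submodule.finrank_sup_add_finrank_inf_eq Vp Vm
    rw [hsup, finrank_top, hV] at h
    omega
  rcases le_or_gt 3 (Module.finrank ℝ Vp) with h | h
  · have hk := key hV ω hΔ A hsurj hpres h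
    left
    apply LinearMap.ext
    intro x
    rw [LinearMap.id_apply]
    have hAu : A (A x - x) = -(A x - x) := by
      rw [map_sub, hsq]
      abel
    have h0 := hk (A x - x) hAu
    exact sub_eq_zero.mp h0
  · -- apply `key` to `-A`
    have hsurj' : Function.Surjective ⇑(-A) := by
      intro y
      obtain ⟨x, hx⟩ := hsurj (-y)
      exact ⟨x, by simp [LinearMap.neg_apply, hx]⟩
    have hpres' : ∀ v₁ v₂ v₃ : V, ω ![v₁, (-A) v₂, (-A) v₃] = ω ![v₁, v₂, v₃] := by
      intro a b c
      rw [LinearMap.neg_apply, LinearMap.neg_apply, neg2, neg3, hpres]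
      ring
    have hker : LinearMap.ker ((-A) - LinearMap.id) = Vm := by
      have e : (-A) - LinearMap.id = -(A + LinearMap.id) := by
        ext y
        simp only [LinearMap.sub_apply, LinearMap.neg_apply, LinearMap.add_apply,
          LinearMap.id_apply]
        abel
      rw [e, hVm]
      ext y
      simp only [LinearMap.mem_ker, LinearMap.neg_apply, neg_eq_zero]
    have h3m : 3 ≤ Module.finrank ℝ (LinearMap.ker ((-A) - LinearMap.id)) := by
      rw [hker]
      omega
    have hk := key hV ω hΔ (-A) hsurj' hpres' h3m
    right
    apply LinearMap.ext
    intro x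
    rw [LinearMap.neg_apply, LinearMap.id_apply]
    have hAu : (-A) (A x + x) = -(A x + x) := by
      rw [LinearMap.neg_apply, map_add, hsq]
      abel
    have h0 := hk (A x + x) hAu
    exact eq_neg_of_add_eq_zero_left h0
end
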